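/- arXiv:1210.8104 — 8 statements merged into one kernel-verified Lean document; each statement's English description precedes it below -/
import Mathlib

section
/- If R is a commutative ring such that its classical quotient ring Q_cl(R) is McCoy, then R is McCoy. -/
/-! Extension along `R → Q_cl(R)` preserves finite generation and density of ideals, so a regular
element `a` of the extension `I Q_cl(R)` exists. Clearing its denominator `s` gives `x ∈ I` with
`x = a s` in `Q_cl(R)`, which is regular there, hence regular in `R` since `R` embeds in
`Q_cl(R)`. -/

def IsDense {R : Type*} [CommRing R] (I : Ideal R) : Prop :=
  ∀ x : R, (∀ y ∈ I, x * y = 0) → x = 0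
def IsMcCoy (R : Type*) [CommRing R] : Prop :=
  ∀ I : Ideal R, I.FG → IsDense I → ∃ a ∈ I, a ∈ nonZeroDivisors R

open scoped nonZeroDivisors

section Localization

variable {R S : Type*} [CommRing R] [CommRing S] [Algebra R S] {M : Submonoid R}
  [IsLocalization M S]

theorem IsDense.map_algebraMap (hM : M ≤ R⁰) {I : Ideal R} (hI : IsDense I) :
    IsDense (I.map (algebraMap R S)) := by
  intro q hq
  obtain ⟨⟨r, s⟩, hrs⟩ := IsLocalization.surj M q
  have hr : r = 0 := by
    refine hI r fun y hy ↦ IsLocalization.injective S hM ?_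
    rw [map_mul, map_zero, ← hrs, mul_right_comm, hq _ (Ideal.mem_map_of_mem _ hy), zero_mul]
  have hs : IsUnit (algebraMap R S s) := IsLocalization.map_units S s
  simpa [hr, hs.mul_left_eq_zero] using hrs

theorem IsLocalization.exists_mem_nonZeroDivisors_of_mem_map (hM : M ≤ R⁰) {I : Ideal R}
    {a : S} (ha : a ∈ I.map (algebraMap R S)) (ha_reg : a ∈ S⁰) : ∃ x ∈ I, x ∈ R⁰ := by
  obtain ⟨⟨x, s⟩, hxs⟩ := (IsLocalization.mem_map_algebraMap_iff M S).1 ha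
  have hs : algebraMap R S s ∈ S⁰ := (IsLocalization.map_units S s).mem_nonZeroDivisors
  refine ⟨x, x.2, mem_nonZeroDivisors_of_injective (IsLocalization.injective S hM) ?_⟩
  rw [← hxs]
  exact mul_mem ha_reg hs

theorem IsMcCoy.of_isLocalization (hM : M ≤ R⁰) (h : IsMcCoy S) : IsMcCoy R := by
  intro I hFG hI
  obtain ⟨a, ha, ha_reg⟩ := h _ (hFG.map (algebraMap R S)) (hI.map_algebraMap (S := S) hM)
  exact IsLocalization.exists_mem_nonZeroDivisors_of_mem_map hM ha ha_reg

end Localization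

theorem stmt1 (R : Type*) [CommRing R]
    (h : IsMcCoy (Localization (nonZeroDivisors R))) : IsMcCoy R :=
  h.of_isLocalization le_rfl
end

section
/- In an mzip commutative Bezout ring, every dense maximal ideal contains a regular element. -/
def IsMzip (R : Type*) [CommRing R] : Prop :=
  ∀ M : Ideal R, M.IsMaximal → IsDense M →
    ∃ J : Ideal R, J.FG ∧ J ≤ M ∧ IsDense J

theorem isDense_span_singleton_iff {R : Type*} [CommRing R] (a : R) :
    IsDense (Ideal.span {a}) ↔ a ∈ nonZeroDivisors R := by
  have kills_span_iff (x : R) : (∀ y ∈ Ideal.span {a}, x * y = 0) ↔ x * a = 0 := by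
    refine ⟨fun hx => hx a (Ideal.mem_span_singleton_self a), fun hx y hy => ?_⟩
    obtain ⟨c, rfl⟩ := Ideal.mem_span_singleton'.mp hy
    rw [mul_left_comm, hx, mul_zero]
  simp only [IsDense, kills_span_iff, mem_nonZeroDivisors_iff_right]

theorem stmt2 (R : Type*) [CommRing R] [IsBezout R] (h : IsMzip R)
    (M : Ideal R) (hM : M.IsMaximal) (hd : IsDense M) :
    ∃ a ∈ M, a ∈ nonZeroDivisors R := by
  obtain ⟨J, hJ_fg, hJM, hJ_dense⟩ := h M hM hd
  obtain ⟨a, rfl⟩ := IsBezout.isPrincipal_of_FG J hJ_fg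
  rw [Ideal.submodule_span_eq, isDense_span_singleton_iff] at hJ_dense
  exact ⟨a, hJM (Ideal.mem_span_singleton_self a), hJ_dense⟩
end

section
/- Let R be a reduced commutative Bezout ring in which every maximal ideal is projective (as an R-module). Then R is mzip if and only if every maximal ideal of R is principal. -/
theorem stmt4 (R : Type*) [CommRing R] [IsReduced R] [IsBezout R]
    (hproj : ∀ M : Ideal R, M.IsMaximal → Module.Projective R M) :
    IsMzip R ↔ ∀ M : Ideal R, M.IsMaximal → M.IsPrincipal := by
  classical
  constructor
  · intro hmzip M hM
    by_cases hdense : IsDense M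
    · -- M is dense: get a f.g. dense J ≤ M, J = (a) with a regular, then M is f.g.
      obtain ⟨J, hJfg, hJM, hJd⟩ := hmzip M hM hdense
      obtain ⟨a, rfl⟩ := (IsBezout.isPrincipal_of_FG J hJfg).1
      have haM : a ∈ M := hJM (Ideal.subset_span rfl)
      have hareg : ∀ x : R, x * a = 0 → x = 0 := by
        intro x hx
        refine hJd x ?_
        intro y hy
        obtain ⟨r, rfl⟩ := Ideal.mem_span_singleton'.mp hy
        rw [← mul_assoc, mul_comm x r, mul_assoc, hx, mul_zero]
      obtain ⟨s, hs⟩ := (Module.projective_def.mp (hproj M hM))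
      set A : M := ⟨a, haM⟩ with hA
      -- key: for all x y : M, (x:R) • s y = (y:R) • s x
      have key : ∀ x y : M, (x : R) • s y = (y : R) • s x := by
        intro x y
        have h1 : (x : R) • y = (y : R) • x := by
          ext; simp [mul_comm]
        calc (x : R) • s y = s ((x : R) • y) := (map_smul s _ _).symm
          _ = s ((y : R) • x) := by rw [h1]
          _ = (y : R) • s x := map_smul s _ _
      have hfg : M.FG := by
        refine ⟨(s A).support.image Subtype.val, le_antisymm ?_ ?_⟩
        · rw [Ideal.span_le]
          intro x hx
          rw [Finset.mem_coe, Finset.mem_image] at hx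
          obtain ⟨i, _, rfl⟩ := hx
          exact i.2
        · intro x hx
          set X : M := ⟨x, hx⟩ with hX
          have hx1 : x = ∑ i ∈ (s X).support, (s X) i * (i : R) := by
            conv_lhs => rw [show x = (X : R) from rfl, ← hs X]
            rw [Finsupp.linearCombination_apply, Finsupp.sum]
            push_cast
            simp [smul_eq_mul]
          rw [hx1]
          refine Ideal.sum_mem _ ?_
          intro i hi
          have hiA : i ∈ (s A).support := by
            by_contra hcon
            have h0 : (s A) i = 0 := Finsupp.notMem_support_iff.mp hcon
            have := congrArg (fun f => f i) (key A X)
            simp only [Finsupp.smul_apply, smul_eq_mul] at this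
            -- this : a * (s X) i = x * (s A) i
            rw [h0, mul_zero, mul_comm] at this
            exact (Finsupp.mem_support_iff.mp hi) (hareg _ this)
          exact Ideal.mul_mem_left _ _
            (Ideal.subset_span (Finset.mem_coe.mpr (Finset.mem_image_of_mem _ hiA)))
      exact IsBezout.isPrincipal_of_FG M hfg
    · -- M is not dense: M = ann(x) for some x ≠ 0, and M is generated by an idempotent-ish m
      unfold IsDense at hdense
      push_neg at hdense
      obtain ⟨x, hxM, hx0⟩ := hdense
      have hxnotM : x ∉ M := by
        intro hmem
        exact hx0 (IsReduced.eq_zero x ⟨2, by rw [pow_two]; exact hxM x hmem⟩)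
      have htop : M ⊔ Ideal.span {x} = ⊤ :=
        hM.out.2 _ (lt_of_le_of_ne le_sup_left (by
          intro h
          apply hxnotM
          rw [h]
          exact Ideal.mem_sup_right (Ideal.subset_span rfl)))
      have h1 : (1 : R) ∈ M ⊔ Ideal.span {x} := htop ▸ Submodule.mem_top
      rw [Submodule.mem_sup] at h1
      obtain ⟨m, hmM, z, hz, hmz⟩ := h1
      obtain ⟨r, rfl⟩ := Ideal.mem_span_singleton'.mp hz
      refine ⟨m, le_antisymm ?_ (Ideal.span_le.mpr (by simpa using hmM))⟩
      intro y hy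
      have : y = y * m := by
        have h2 : y * (m + r * x) = y * 1 := by rw [hmz]
        have h3 : x * y = 0 := hxM y hy
        rw [mul_one, mul_add] at h2
        calc y = y * m + y * (r * x) := h2.symm
          _ = y * m + r * (x * y) := by ring
          _ = y * m := by rw [h3]; ring
      rw [this]
      exact Ideal.mul_mem_left _ _ (Ideal.subset_span rfl)
  · intro hp M hM hd
    obtain ⟨a, ha⟩ := (hp M hM).1
    exact ⟨M, ha ▸ ⟨{a}, by simp⟩, le_refl _, hd⟩
end

section
/- A reduced commutative ring R whose classical quotient ring Q_cl(R) is a Kasch ring has Q_cl(R) semisimple, i.e., Q_cl(R) is a finite product of fields. -/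
def IsKasch (R : Type*) [CommRing R] : Prop :=
  ∀ M : Ideal R, M.IsMaximal → ∃ x : R, x ≠ 0 ∧ ∀ y ∈ M, y * x = 0

theorem stmt5 (R : Type*) [CommRing R] [IsReduced R]
    (h : IsKasch (Localization (nonZeroDivisors R))) :
    IsSemisimpleRing (Localization (nonZeroDivisors R)) := by
  set Q := Localization (nonZeroDivisors R)
  apply IsSemisimpleModule.of_sSup_simples_eq_top
  by_contra hne
  obtain ⟨M, hM, hle⟩ := Ideal.exists_le_maximal
    (sSup {m : Submodule Q Q | IsSimpleModule Q m}) hne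
  obtain ⟨x, hx0, hxann⟩ := h M hM
  have hxM : x ∉ M := by
    intro hxM
    exact hx0 (IsReduced.eq_zero x ⟨2, by simpa [pow_two] using hxann x hxM⟩)
  have hdisj : Disjoint (Ideal.span {x}) M := by
    rw [disjoint_iff]
    apply le_bot_iff.mp
    intro y ⟨hy1, hy2⟩
    obtain ⟨a, rfl⟩ := Ideal.mem_span_singleton'.mp hy1
    have h1 : (a * x) * x = 0 := hxann _ hy2
    have h0 : a * x = 0 := IsReduced.eq_zero _ ⟨2, by
      calc (a*x)^2 = a * ((a*x)*x) := by ring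
        _ = 0 := by rw [h1, mul_zero]⟩
    simp [h0]
  have hcodisj : Codisjoint (Ideal.span {x}) M := by
    rw [codisjoint_iff, sup_comm]
    refine (Ideal.isMaximal_def.mp hM).2 _ ?_
    refine lt_of_le_of_ne le_sup_left fun hEq ↦ hxM ?_
    rw [hEq]
    exact Submodule.mem_sup_right (Ideal.mem_span_singleton_self x)
  have hcompl : IsCompl (Ideal.span {x}) M := ⟨hdisj, hcodisj⟩
  have hatom : IsAtom (Ideal.span ({x} : Set Q)) :=
    hcompl.isAtom_iff_isCoatom.mpr (Ideal.isMaximal_def.mp hM)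
  have hsimple : IsSimpleModule Q (Ideal.span ({x} : Set Q)) :=
    isSimpleModule_iff_isAtom.mpr hatom
  have : Ideal.span {x} ≤ M := le_trans (le_sSup hsimple) hle
  exact hxM (this (Ideal.mem_span_singleton_self x))
end

section
/- A reduced commutative ring whose classical quotient ring is Kasch has only finitely many minimal prime ideals. -/
section

variable {Q : Type*} [CommRing Q]

theorem Ideal.IsMaximal.eq_of_isPrime_of_mul_eq_zero {M q : Ideal Q} (hM : M.IsMaximal)
    (hq : q.IsPrime) {x : Q} (hxq : x ∉ q) (hx : ∀ y ∈ M, y * x = 0) : M = q :=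
  hM.eq_of_le hq.ne_top fun y hy => (hq.mem_or_mem (hx y hy ▸ q.zero_mem)).resolve_right hxq

theorem IsKasch.exists_notMem [IsReduced Q] (hK : IsKasch Q) {M : Ideal Q} (hM : M.IsMaximal) :
    ∃ x ∉ M, ∀ y ∈ M, y * x = 0 := by
  obtain ⟨x, hx0, hx⟩ := hK M hM
  exact ⟨x, fun hxM => hx0 (IsReduced.eq_zero x ⟨2, by rw [sq]; exact hx x hxM⟩), hx⟩

theorem IsKasch.setOf_isPrime_finite [IsReduced Q] (hK : IsKasch Q) :
    {q : Ideal Q | q.IsPrime}.Finite := by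
  let A (z : Q) : Set (Ideal Q) := {M | M.IsMaximal ∧ z ∉ M ∧ ∀ y ∈ M, y * z = 0}
  have hA (z : Q) : (A z).Subsingleton := fun M₁ h₁ M₂ h₂ =>
    h₁.1.eq_of_isPrime_of_mul_eq_zero h₂.1.isPrime h₂.2.1 h₁.2.2
  have hspan : Ideal.span {z | (A z).Nonempty} = ⊤ := by
    by_contra hne
    obtain ⟨M, hM, hle⟩ := Ideal.exists_le_maximal _ hne
    obtain ⟨x, hxM, hx⟩ := hK.exists_notMem hM
    exact hxM (hle (Ideal.subset_span ⟨M, hM, hxM, hx⟩))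
  obtain ⟨t, hts, ht⟩ := (Ideal.span_eq_top_iff_finite _).mp hspan
  refine (t.finite_toSet.biUnion fun z _ => (hA z).finite).subset fun q hq => ?_
  obtain ⟨z, hzt, hzq⟩ : ∃ z ∈ t, z ∉ q := by
    by_contra! h
    exact hq.ne_top (top_le_iff.mp (ht ▸ Ideal.span_le.mpr h))
  obtain ⟨M, hMz⟩ := hts hzt
  exact Set.mem_biUnion hzt (hMz.1.eq_of_isPrime_of_mul_eq_zero hq hzq hMz.2.2 ▸ hMz)

theorem minimalPrimes_eq_image_comap_of_le_nonZeroDivisors {R : Type*} [CommRing R]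
    [Algebra R Q] {S : Submonoid R} (hS : S ≤ nonZeroDivisors R) [IsLocalization S Q] :
    minimalPrimes R = Ideal.comap (algebraMap R Q) '' minimalPrimes Q := by
  have := IsLocalization.minimalPrimes_comap S Q ⊥
  rwa [← RingHom.ker_eq_comap_bot,
    (RingHom.injective_iff_ker_eq_bot _).mp (IsLocalization.injective Q hS)] at this

end

theorem stmt6 (R : Type*) [CommRing R] [IsReduced R]
    (h : IsKasch (Localization (nonZeroDivisors R))) :
    (minimalPrimes R).Finite := by
  rw [minimalPrimes_eq_image_comap_of_le_nonZeroDivisors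
    (Q := Localization (nonZeroDivisors R)) le_rfl]
  exact (h.setOf_isPrime_finite.subset fun _ hp => hp.1.1).image _
end

section
/- A reduced commutative Kasch McCoy ring is von Neumann regular, provided it coincides with its own classical quotient ring (every regular element is a unit). -/
theorem stmt7 (R : Type*) [CommRing R] [IsReduced R]
    (hK : IsKasch R) (hM : IsMcCoy R)
    (hQ : ∀ a ∈ nonZeroDivisors R, IsUnit a) :
    ∀ a : R, ∃ x : R, a = a * x * a := by
  intro a
  -- annihilator of a as an ideal
  let J : Ideal R :=
    { carrier := {s | s * a = 0}
      add_mem' := by intro p q hp hq; simp only [Set.mem_setOf_eq] at *; rw [add_mul, hp, hq, add_zero]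
      zero_mem' := by simp
      smul_mem' := by intro c p hp; simp only [Set.mem_setOf_eq, smul_eq_mul] at *
                      rw [mul_assoc, hp, mul_zero] }
  have htop : Ideal.span {a} ⊔ J = ⊤ := by
    by_contra hne
    obtain ⟨M, hMmax, hle⟩ := Ideal.exists_le_maximal _ hne
    obtain ⟨x, hx0, hx⟩ := hK M hMmax
    have haM : a ∈ M := hle (le_sup_left (b := J) (Ideal.subset_span rfl))
    have hxa : x * a = 0 := by rw [mul_comm]; exact hx a haM
    have hxJ : x ∈ J := hxa
    have hxM : x ∈ M := hle (le_sup_right (a := Ideal.span {a}) hxJ)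
    have : x * x = 0 := hx x hxM
    exact hx0 (IsReduced.eq_zero x ⟨2, by rw [sq]; exact this⟩)
  have h1 : (1 : R) ∈ Ideal.span {a} ⊔ J := htop ▸ Submodule.mem_top
  obtain ⟨y, hy, z, hz, hyz⟩ := Submodule.mem_sup.mp h1
  obtain ⟨r, hr⟩ := Ideal.mem_span_singleton'.mp hy
  have hza : z * a = 0 := hz
  refine ⟨r, ?_⟩
  have : a * 1 = a * (y + z) := by rw [hyz]
  calc a = a * (y + z) := by rw [hyz, mul_one]
    _ = a * r * a := by rw [← hr, mul_add, mul_comm a z, hza, add_zero, ← mul_assoc]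
end

section
/- Every commutative Bezout domain has stable range 2: whenever aR + bR + cR = R, there exist x, y ∈ R with (a + cx)R + (b + cy)R = R. -/
lemma span_pair_top_iff {R : Type*} [CommRing R] (a b : R) :
    Ideal.span {a} + Ideal.span {b} = (⊤ : Ideal R) ↔ ∃ m n : R, m * a + n * b = 1 := by
  rw [Submodule.add_eq_sup, ← Ideal.span_insert, Ideal.eq_top_iff_one, Ideal.mem_span_pair]

theorem stmt13 (R : Type*) [CommRing R] [IsDomain R] [IsBezout R]
    (a b c : R)
    (h : Ideal.span {a} + Ideal.span {b} + Ideal.span {c} = ⊤) :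
    ∃ x y : R,
      Ideal.span {a + c * x} + Ideal.span {b + c * y} = (⊤ : Ideal R) := by
  -- get d with span{a,b} = span{d}
  have hab : Ideal.span {a} + Ideal.span {b} = Ideal.span ({a, b} : Set R) :=
    (Ideal.span_insert a {b}).symm
  obtain ⟨d, hd⟩ := (IsBezout.isPrincipal_of_FG (Ideal.span ({a, b} : Set R))
    (Submodule.fg_span (Set.toFinite _))).principal
  -- a = d * a', b = d * b'
  have hamem : a ∈ Ideal.span ({a, b} : Set R) := Ideal.subset_span (by simp)
  have hbmem : b ∈ Ideal.span ({a, b} : Set R) := Ideal.subset_span (by simp)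
  rw [hd, Ideal.submodule_span_eq, Ideal.mem_span_singleton] at hamem hbmem
  obtain ⟨a', ha'⟩ := hamem
  obtain ⟨b', hb'⟩ := hbmem
  -- d = u*a + v*b
  have hdmem : d ∈ Ideal.span ({a, b} : Set R) := by
    rw [hd]; exact Ideal.subset_span rfl
  rw [Ideal.mem_span_pair] at hdmem
  obtain ⟨u, v, huv⟩ := hdmem
  -- 1 = p*d + q*c
  have hdc : Ideal.span {d} + Ideal.span {c} = (⊤ : Ideal R) := by
    rw [← h, hab, hd]
  obtain ⟨p, q, hpq⟩ := (span_pair_top_iff d c).mp hdc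
  by_cases hd0 : d = 0
  · -- then a = b = 0 and c generates ⊤
    subst hd0
    have h1 : (p * 0 + q * c : R) = 1 := hpq
    refine ⟨q, 0, (span_pair_top_iff _ _).mpr ⟨1, 0, ?_⟩⟩
    rw [ha']
    linear_combination h1
  · have hcancel : a' * u + b' * v = 1 := by
      apply mul_left_cancel₀ hd0
      calc d * (a' * u + b' * v) = u * (d * a') + v * (d * b') := by ring
        _ = u * a + v * b := by rw [← ha', ← hb']
        _ = d * 1 := by rw [huv]; ring
    refine ⟨v * q, -(u * q), (span_pair_top_iff _ _).mpr ⟨p * u + b', p * v - a', ?_⟩⟩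
    calc (p * u + b') * (a + c * (v * q)) + (p * v - a') * (b + c * -(u * q))
        = p * (u * a + v * b) + (b' * a - a' * b) + c * q * (a' * u + b' * v) := by ring
      _ = 1 := by rw [huv, ha', hb', hcancel]; linear_combination hpq
end

section
/- Let R be a reduced commutative ring and M a maximal ideal of R that is projective as an R-module. Then either M has zero annihilator or M = eR for some idempotent e. -/
theorem stmt14 (R : Type*) [CommRing R] [IsReduced R]
    (M : Ideal R) (hM : M.IsMaximal) (hproj : Module.Projective R M) :
    IsDense M ∨ ∃ e : R, e * e = e ∧ M = Ideal.span {e} := by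
  by_cases hd : IsDense M
  · exact Or.inl hd
  · right
    simp only [IsDense, not_forall] at hd
    obtain ⟨x, hxM, hx0⟩ := hd
    have hxnotM : x ∉ M := by
      intro hxm
      exact hx0 (IsReduced.eq_zero x ⟨2, by rw [sq]; exact hxM x hxm⟩)
    obtain ⟨y, i, hi, hyi⟩ := hM.exists_inv hxnotM
    have key : ∀ z ∈ M, i * z = z := by
      intro z hz
      have : z * (y * x + i) = z * 1 := by rw [hyi]
      have h2 : x * z = 0 := hxM z hz
      linear_combination z * hyi - y * h2
    refine ⟨i, key i hi, le_antisymm ?_ ?_⟩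
    · intro z hz
      rw [Ideal.mem_span_singleton]
      exact ⟨z, (key z hz).symm⟩
    · rw [Ideal.span_le, Set.singleton_subset_iff]
      exact hi
end
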